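/- For integers 1 \leq r \leq n \leq d/2 and q \neq 0 with q not a root of unity, the expression q^{2(2n-d-1)r - 2r(2n-r-1)} \prod_{i=1}^{r} \frac{(q^{2(2+n-i)};q^2)_{d-2n}^2}{(q^{2(1+n-i)};q^2)_{d-2n}^2} \cdot \frac{1-q^{2(d-2n+3+2(n-i))}}{1-q^{2(d-2n+1+2(n-i))}} \cdot \prod_{1 \leq j<k \leq r} \frac{(1-q^{2(d-2n+3+(n-j)+(n-k))})^2}{(1-q^{2(d-2n+1+(n-j)+(n-k))})^2} \cdot \prod_{j=1}^{r}\prod_{k=r+1}^{n} \frac{(1-q^{2(d-2n+2+(n-j)+(n-k))})^2 (1-q^{2(1+k-j)})^2}{(1-q^{2(d-2n+1+(n-j)+(n-k))})^2 (1-q^{2(k-j)})^2} equals q^{2r(d-r)} \binom{d}{r}_{q^{-2}}^2 - q^{2(r-1)(d-r+1)} \binom{d}{r-1}_{q^{-2}}^2, where \binom{d}{r}_s is the Gaussian binomial coefficient in base s. -/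

import Mathlib

/-- The q-Pochhammer symbol `(x;p)_m = ∏_{i=0}^{m-1} (1 - x p^i)`. -/
noncomputable def qPoch {F : Type*} [Field F] (x p : F) (m : ℕ) : F :=
  ∏ i ∈ Finset.range m, (1 - x * p ^ i)

/-- The s-factorial `[m]_s! = ∏_{j=1}^m (1-s^j)/(1-s)`. -/
noncomputable def qFact {F : Type*} [Field F] (s : F) (m : ℕ) : F :=
  ∏ j ∈ Finset.range m, (1 - s ^ (j + 1)) / (1 - s)

/-- The Gaussian binomial coefficient `(d r)_s = [d]_s!/([r]_s! [d-r]_s!)`. -/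
noncomputable def qBinom {F : Type*} [Field F] (s : F) (d r : ℕ) : F :=
  qFact s d / (qFact s r * qFact s (d - r))

namespace QD17

variable {F : Type*} [Field F]

/-- `PP t a b = ∏_{m=a+1}^{b} (1 - t^m)`. -/
noncomputable def PP (t : F) (a b : ℕ) : F := ∏ m ∈ Finset.Ioc a b, (1 - t ^ m)

theorem one_sub_ne {t : F} (ht : ∀ m : ℕ, 1 ≤ m → t ^ m ≠ 1) {m : ℕ} (hm : 1 ≤ m) :
    (1 : F) - t ^ m ≠ 0 :=
  sub_ne_zero_of_ne fun h => ht m hm h.symm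

theorem PP_eq_range (t : F) (a b : ℕ) :
    PP t a b = ∏ j ∈ Finset.range (b - a), (1 - t ^ (a + 1 + j)) := by
  unfold PP
  rw [← Finset.Ico_add_one_add_one_eq_Ioc, Finset.prod_Ico_eq_prod_range]
  simp only [Nat.add_sub_add_right]

theorem PP_ne {t : F} (ht : ∀ m : ℕ, 1 ≤ m → t ^ m ≠ 1) (a b : ℕ) : PP t a b ≠ 0 := by
  unfold PP
  refine Finset.prod_ne_zero_iff.mpr fun m hm => ?_
  have h1 : 1 ≤ m := by have := (Finset.mem_Ioc.mp hm).1; omega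
  exact one_sub_ne ht h1

theorem PP_split (t : F) {a b c : ℕ} (hab : a ≤ b) (hbc : b ≤ c) :
    PP t a b * PP t b c = PP t a c :=
  Finset.prod_Ioc_consecutive _ hab hbc

theorem PP_diag (t : F) (a : ℕ) : PP t a a = 1 := by
  unfold PP; simp

theorem PP_single (t : F) (a : ℕ) : PP t a (a + 1) = 1 - t ^ (a + 1) := by
  unfold PP
  rw [Nat.Ioc_succ_singleton, Finset.prod_singleton]

theorem PP_bot (t : F) {a b : ℕ} (h : a < b) :
    PP t a b = (1 - t ^ (a + 1)) * PP t (a + 1) b := by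
  rw [← PP_split t (Nat.le_succ a) h, PP_single]

theorem PP_top (t : F) {a b : ℕ} (h : a ≤ b) :
    PP t a (b + 1) = PP t a b * (1 - t ^ (b + 1)) := by
  rw [← PP_split t h (Nat.le_succ b), PP_single]

theorem qPoch_eq (t : F) (c m : ℕ) : qPoch (t ^ (c + 1)) t m = PP t c (c + m) := by
  rw [PP_eq_range]
  unfold qPoch
  rw [Nat.add_sub_cancel_left]
  exact Finset.prod_congr rfl fun j _ => by rw [← pow_add]

theorem PP_ratio {t : F} (ht : ∀ m : ℕ, 1 ≤ m → t ^ m ≠ 1) (c m : ℕ) :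
    PP t (c + 1) (c + 1 + m) / PP t c (c + m) =
      (1 - t ^ (c + 1 + m)) / (1 - t ^ (c + 1)) := by
  rw [div_eq_div_iff (PP_ne ht _ _) (one_sub_ne ht (by omega))]
  calc PP t (c + 1) (c + 1 + m) * (1 - t ^ (c + 1))
      = PP t c (c + 1) * PP t (c + 1) (c + 1 + m) := by rw [PP_single]; ring
    _ = PP t c (c + 1 + m) := PP_split t (Nat.le_succ c) (by omega)
    _ = PP t c (c + m) * PP t (c + m) (c + m + 1) := by
        rw [PP_split t (by omega) (by omega), show c + m + 1 = c + 1 + m by omega]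
    _ = (1 - t ^ (c + 1 + m)) * PP t c (c + m) := by
        rw [PP_single, show c + m + 1 = c + 1 + m by omega]; ring

theorem tele_down (f : ℕ → F) (a : ℕ) (ha : 1 ≤ a) :
    ∀ b, a - 1 ≤ b → (∀ k, a - 1 ≤ k → k ≤ b → f k ≠ 0) →
      ∏ k ∈ Finset.Icc a b, (f (k - 1) / f k) = f (a - 1) / f b := by
  refine Nat.le_induction ?_ ?_
  · intro hf
    rw [Finset.Icc_eq_empty (by omega), Finset.prod_empty,
      div_self (hf _ le_rfl le_rfl)]
  · intro b hb ih hf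
    rw [Finset.prod_Icc_succ_top (by omega : a ≤ b + 1),
      ih fun k h1 h2 => hf k h1 (by omega), Nat.add_sub_cancel]
    have h1 : f b ≠ 0 := hf b hb (by omega)
    have h2 : f (b + 1) ≠ 0 := hf (b + 1) (by omega) le_rfl
    field_simp

theorem tele_up (f : ℕ → F) (a : ℕ) (ha : 1 ≤ a) :
    ∀ b, a - 1 ≤ b → (∀ k, a - 1 ≤ k → k ≤ b → f k ≠ 0) →
      ∏ k ∈ Finset.Icc a b, (f k / f (k - 1)) = f b / f (a - 1) := by
  refine Nat.le_induction ?_ ?_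
  · intro hf
    rw [Finset.Icc_eq_empty (by omega), Finset.prod_empty,
      div_self (hf _ le_rfl le_rfl)]
  · intro b hb ih hf
    rw [Finset.prod_Icc_succ_top (by omega : a ≤ b + 1),
      ih fun k h1 h2 => hf k h1 (by omega), Nat.add_sub_cancel]
    have h1 : f b ≠ 0 := hf b hb (by omega)
    have h2 : f (a - 1) ≠ 0 := hf (a - 1) le_rfl (by omega)
    field_simp

theorem Icc_prod_range (f : ℕ → F) (r : ℕ) :
    ∏ j ∈ Finset.Icc 1 r, f j = ∏ i ∈ Finset.range r, f (i + 1) := by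
  rw [← Finset.Ico_add_one_right_eq_Icc, Finset.prod_Ico_eq_prod_range, Nat.add_sub_cancel]
  exact Finset.prod_congr rfl fun i _ => by rw [Nat.add_comm]

theorem Icc_prod_reflect (f : ℕ → F) (r : ℕ) :
    ∏ j ∈ Finset.Icc 1 r, f j = ∏ i ∈ Finset.range r, f (r - i) := by
  rw [Icc_prod_range, ← Finset.prod_range_reflect (fun i => f (i + 1)) r]
  refine Finset.prod_congr rfl fun i hi => ?_
  have : i < r := Finset.mem_range.mp hi
  congr 1; omega

theorem prodD2 (t : F) (r : ℕ) :
    ∏ j ∈ Finset.Icc 1 r, (1 - t ^ (r + 1 - j)) = PP t 0 r := by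
  rw [Icc_prod_reflect, PP_eq_range, Nat.sub_zero]
  refine Finset.prod_congr rfl fun i hi => ?_
  have : i < r := Finset.mem_range.mp hi
  rw [show r + 1 - (r - i) = 0 + 1 + i by omega]

theorem prodD1 (t : F) (r d : ℕ) (h : 2 * r ≤ d) :
    ∏ j ∈ Finset.Icc 1 r, (1 - t ^ (d + 2 - j - r)) = PP t (d + 1 - 2 * r) (d - r + 1) := by
  rw [Icc_prod_reflect, PP_eq_range, show d - r + 1 - (d + 1 - 2 * r) = r by omega]
  refine Finset.prod_congr rfl fun i hi => ?_
  have : i < r := Finset.mem_range.mp hi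
  rw [show d + 2 - (r - i) - r = d + 1 - 2 * r + 1 + i by omega]

theorem prodN (t : F) : ∀ r d : ℕ, 2 * r ≤ d →
    ∏ j ∈ Finset.Icc 1 r, ((1 - t ^ (d + 2 - 2 * j)) * (1 - t ^ (d + 1 - 2 * j)))
      = PP t (d - 2 * r) d := by
  intro r
  induction r with
  | zero => intro d _; simp [PP_diag]
  | succ r ih =>
    intro d hd
    obtain ⟨c, rfl⟩ : ∃ c, d = 2 * r + 2 + c := ⟨d - (2 * r + 2), by omega⟩
    rw [Finset.prod_Icc_succ_top (by omega : 1 ≤ r + 1), ih _ (by omega)]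
    rw [show 2 * r + 2 + c - 2 * r = c + 2 by omega,
      show 2 * r + 2 + c - 2 * (r + 1) = c by omega,
      show 2 * r + 2 + c + 2 - 2 * (r + 1) = c + 2 by omega,
      show 2 * r + 2 + c + 1 - 2 * (r + 1) = c + 1 by omega]
    rw [PP_bot t (show c < 2 * r + 2 + c by omega),
      PP_bot t (show c + 1 < 2 * r + 2 + c by omega)]
    ring

theorem zpow2 (q : F) {z : ℤ} (m : ℕ) (h : z = 2 * (m : ℤ)) : q ^ z = (q ^ 2) ^ m := by
  subst h
  rw [show (2 * (m : ℤ)) = ((2 * m : ℕ) : ℤ) by push_cast; ring, zpow_natCast, pow_mul]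

theorem qFact_term_ne {s : F} (hs : ∀ m : ℕ, 1 ≤ m → (1 : F) - s ^ m ≠ 0) (k : ℕ) :
    qFact s k ≠ 0 := by
  unfold qFact
  refine Finset.prod_ne_zero_iff.mpr fun j _ => ?_
  exact div_ne_zero (hs _ (by omega)) (by simpa using hs 1 le_rfl)

theorem qBinom_ratio (s : F) (hs : ∀ m : ℕ, 1 ≤ m → (1 : F) - s ^ m ≠ 0)
    (d k : ℕ) (hk : k ≤ d) :
    qBinom s d k = ∏ j ∈ Finset.range (d - k), ((1 - s ^ (k + 1 + j)) / (1 - s ^ (j + 1))) := by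
  have hs1 : (1 : F) - s ≠ 0 := by simpa using hs 1 le_rfl
  have split : qFact s d
      = qFact s k * ∏ x ∈ Finset.range (d - k), (1 - s ^ (k + x + 1)) / (1 - s) := by
    unfold qFact
    conv_lhs => rw [show d = k + (d - k) by omega]
    rw [Finset.prod_range_add]
  unfold qBinom
  rw [split, mul_div_mul_left _ _ (qFact_term_ne hs k)]
  unfold qFact
  rw [← Finset.prod_div_distrib]
  refine Finset.prod_congr rfl fun j _ => ?_
  have h1 : (1 : F) - s ^ (j + 1) ≠ 0 := hs (j + 1) (by omega)
  rw [show k + j + 1 = k + 1 + j by omega]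
  field_simp

theorem qBinom_inv {t : F} (ht : ∀ m : ℕ, 1 ≤ m → t ^ m ≠ 1) (ht0 : t ≠ 0)
    (d k : ℕ) (hk : k ≤ d) :
    qBinom t⁻¹ d k = (t ^ (k * (d - k)))⁻¹ * (PP t k d / PP t 0 (d - k)) := by
  have hs : ∀ m : ℕ, 1 ≤ m → (1 : F) - t⁻¹ ^ m ≠ 0 := by
    intro m hm
    rw [inv_pow]
    refine sub_ne_zero_of_ne fun h => ?_
    exact ht m hm (by rw [← inv_inv (t ^ m), ← h, inv_one])
  have step : ∀ j ∈ Finset.range (d - k),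
      (1 - t⁻¹ ^ (k + 1 + j)) / (1 - t⁻¹ ^ (j + 1))
        = (t ^ k)⁻¹ * ((1 - t ^ (k + 1 + j)) / (1 - t ^ (j + 1))) := by
    intro j _
    have h1 : (1 : F) - t ^ (j + 1) ≠ 0 := one_sub_ne ht (by omega)
    have pJ : t ^ (j + 1) ≠ 0 := pow_ne_zero _ ht0
    have pK : t ^ (k + 1 + j) ≠ 0 := pow_ne_zero _ ht0
    have pk : t ^ k ≠ 0 := pow_ne_zero _ ht0
    have h1' : t ^ (j + 1) - 1 ≠ 0 := fun h => h1 (by rw [sub_eq_zero.mp h]; ring)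
    have e1 : 1 - t⁻¹ ^ (k + 1 + j) = (t ^ (k + 1 + j))⁻¹ * (t ^ (k + 1 + j) - 1) := by
      rw [mul_sub, inv_mul_cancel₀ pK, inv_pow, mul_one]
    have e2 : 1 - t⁻¹ ^ (j + 1) = (t ^ (j + 1))⁻¹ * (t ^ (j + 1) - 1) := by
      rw [mul_sub, inv_mul_cancel₀ pJ, inv_pow, mul_one]
    rw [e1, e2, show k + 1 + j = k + (j + 1) by omega, pow_add]
    field_simp
    ring
  have eden : ∏ j ∈ Finset.range (d - k), (1 - t ^ (j + 1)) = PP t 0 (d - k) := by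
    rw [PP_eq_range, Nat.sub_zero]
    exact Finset.prod_congr rfl fun j _ => by rw [show 0 + 1 + j = j + 1 by omega]
  rw [qBinom_ratio t⁻¹ hs d k hk, Finset.prod_congr rfl step, Finset.prod_mul_distrib,
    Finset.prod_const, Finset.card_range, Finset.prod_div_distrib, eden, ← PP_eq_range,
    inv_pow, ← pow_mul]

theorem endgame (S P X Y A B u v w : F) (hS : S ≠ 0) (hP : P ≠ 0)
    (hX : X ≠ 0) (hY : Y ≠ 0) (hA : A ≠ 0) (hB : B ≠ 0) (hu : u ≠ 0) (hv : v ≠ 0) (hw : w ≠ 0)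
    (h1u : 1 - u ≠ 0) (h1v : 1 - v ≠ 0) :
    (w * u)⁻¹ * ((S / P) ^ 2 * ((1 - u * (v * v)) / (1 - u))) *
        ((1 - u) * (X * A) / (X * Y)) ^ 2 *
        (Y * P / (S * (B * (1 - v)))) ^ 2
      = w * u * ((w * u)⁻¹ * ((1 - u * v) * A / (B * (1 - v)))) ^ 2
        - w * (w⁻¹ * (A / B)) ^ 2 := by
  calc (w * u)⁻¹ * ((S / P) ^ 2 * ((1 - u * (v * v)) / (1 - u))) *
        ((1 - u) * (X * A) / (X * Y)) ^ 2 *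
        (Y * P / (S * (B * (1 - v)))) ^ 2
      = (1 - u * (v * v)) * (1 - u) * A ^ 2 / (w * u * (B * (1 - v)) ^ 2) := by
        simp only [div_pow, mul_pow, inv_eq_one_div, div_mul_div_comm, one_mul, mul_one]
        rw [div_eq_div_iff (by apply_rules [mul_ne_zero, pow_ne_zero])
          (by apply_rules [mul_ne_zero, pow_ne_zero])]
        ring
    _ = ((1 - u * v) ^ 2 - u * (1 - v) ^ 2) * A ^ 2 / (w * u * (B * (1 - v)) ^ 2) := by
        rw [show (1 - u * (v * v)) * (1 - u) = (1 - u * v) ^ 2 - u * (1 - v) ^ 2 from by ring]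
    _ = (1 - u * v) ^ 2 * A ^ 2 / (w * u * (B * (1 - v)) ^ 2)
          - u * (1 - v) ^ 2 * A ^ 2 / (w * u * (B * (1 - v)) ^ 2) := by
        rw [sub_mul, sub_div]
    _ = w * u * ((w * u)⁻¹ * ((1 - u * v) * A / (B * (1 - v)))) ^ 2
        - w * (w⁻¹ * (A / B)) ^ 2 := by
        congr 1
        · field_simp
        · field_simp

theorem prodDesc (t : F) (c r : ℕ) (h : r < c) :
    ∏ j ∈ Finset.Icc 1 r, (1 - t ^ (c - j)) = PP t (c - 1 - r) (c - 1) := by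
  rw [Icc_prod_reflect, PP_eq_range, show c - 1 - (c - 1 - r) = r by omega]
  refine Finset.prod_congr rfl fun i hi => ?_
  have : i < r := Finset.mem_range.mp hi
  rw [show c - (r - i) = c - 1 - r + 1 + i by omega]

end QD17

set_option maxHeartbeats 2000000 in
open QD17 in
/-- for `1 ≤ r ≤ n ≤ d/2` and `q` neither zero nor a root of unity,
the quantum dimension `Dim_q(V_{ω_r}^q)` equals
`q^{2r(d-r)} (d r)_{q^{-2}}² - q^{2(r-1)(d-r+1)} (d r-1)_{q^{-2}}²`. -/
theorem quantum_dimension_fundamental {F : Type*} [Field F] (q : F) (hq0 : q ≠ 0)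
    (hq : ∀ m : ℕ, 1 ≤ m → q ^ m ≠ 1)
    (n d r : ℕ) (hr : 1 ≤ r) (hrn : r ≤ n) (hnd : 2 * n ≤ d) :
    q ^ (2 * (2 * (n : ℤ) - d - 1) * r - 2 * (r : ℤ) * (2 * (n : ℤ) - r - 1)) *
      (∏ i ∈ Finset.Icc 1 r,
        (qPoch (q ^ (2 * ((2 : ℤ) + n - i))) (q ^ 2) (d - 2 * n)) ^ 2 /
            (qPoch (q ^ (2 * ((1 : ℤ) + n - i))) (q ^ 2) (d - 2 * n)) ^ 2 *
          ((1 - q ^ (2 * ((d : ℤ) - 2 * n + 3 + 2 * ((n : ℤ) - i)))) /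
            (1 - q ^ (2 * ((d : ℤ) - 2 * n + 1 + 2 * ((n : ℤ) - i)))))) *
      (∏ j ∈ Finset.Icc 1 r, ∏ k ∈ Finset.Icc (j + 1) r,
        (1 - q ^ (2 * ((d : ℤ) - 2 * n + 3 + ((n : ℤ) - j) + ((n : ℤ) - k)))) ^ 2 /
          (1 - q ^ (2 * ((d : ℤ) - 2 * n + 1 + ((n : ℤ) - j) + ((n : ℤ) - k)))) ^ 2) *
      (∏ j ∈ Finset.Icc 1 r, ∏ k ∈ Finset.Icc (r + 1) n,
        (1 - q ^ (2 * ((d : ℤ) - 2 * n + 2 + ((n : ℤ) - j) + ((n : ℤ) - k)))) ^ 2 *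
            (1 - q ^ (2 * ((1 : ℤ) + k - j))) ^ 2 /
          ((1 - q ^ (2 * ((d : ℤ) - 2 * n + 1 + ((n : ℤ) - j) + ((n : ℤ) - k)))) ^ 2 *
            (1 - q ^ (2 * ((k : ℤ) - j))) ^ 2))
      = q ^ (2 * r * (d - r)) * (qBinom (q ^ (-2 : ℤ)) d r) ^ 2
        - q ^ (2 * (r - 1) * (d - r + 1)) * (qBinom (q ^ (-2 : ℤ)) d (r - 1)) ^ 2 := by
  obtain ⟨t, htdef⟩ : ∃ t : F, t = q ^ 2 := ⟨_, rfl⟩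
  rw [← htdef]
  have ht : ∀ m : ℕ, 1 ≤ m → t ^ m ≠ 1 := fun m hm => by
    rw [htdef, ← pow_mul]; exact hq (2 * m) (by omega)
  have ht0 : t ≠ 0 := htdef ▸ pow_ne_zero 2 hq0
  have hne : ∀ m : ℕ, 1 ≤ m → (1 : F) - t ^ m ≠ 0 := fun m hm => one_sub_ne ht hm
  -- prefactor
  have hpref : q ^ (2 * (2 * (n : ℤ) - d - 1) * r - 2 * (r : ℤ) * (2 * (n : ℤ) - r - 1))
      = (t ^ (r * (d - r)))⁻¹ := by
    have hzz : (2 * (2 * (n : ℤ) - d - 1) * r - 2 * (r : ℤ) * (2 * (n : ℤ) - r - 1))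
        = -(((2 * (r * (d - r)) : ℕ) : ℤ)) := by
      push_cast [Nat.cast_sub (show r ≤ d by omega)]
      ring
    rw [hzz, zpow_neg, zpow_natCast, pow_mul, ← htdef]
  -- first product
  have hP1 : (∏ i ∈ Finset.Icc 1 r,
        (qPoch (q ^ (2 * ((2 : ℤ) + n - i))) t (d - 2 * n)) ^ 2 /
            (qPoch (q ^ (2 * ((1 : ℤ) + n - i))) t (d - 2 * n)) ^ 2 *
          ((1 - q ^ (2 * ((d : ℤ) - 2 * n + 3 + 2 * ((n : ℤ) - i)))) /
            (1 - q ^ (2 * ((d : ℤ) - 2 * n + 1 + 2 * ((n : ℤ) - i))))))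
      = (PP t (d - n - r) (d - n) / PP t (n - r) n) ^ 2
          * ((1 - t ^ (d + 1)) / (1 - t ^ (d + 1 - 2 * r))) := by
    rw [Finset.prod_mul_distrib]
    congr 1
    · calc (∏ i ∈ Finset.Icc 1 r,
            (qPoch (q ^ (2 * ((2 : ℤ) + n - i))) t (d - 2 * n)) ^ 2 /
              (qPoch (q ^ (2 * ((1 : ℤ) + n - i))) t (d - 2 * n)) ^ 2)
          = ∏ i ∈ Finset.Icc 1 r, ((1 - t ^ (d + 1 - n - i)) / (1 - t ^ (n + 1 - i))) ^ 2 := by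
            refine Finset.prod_congr rfl fun i hi => ?_
            obtain ⟨hi1, hi2⟩ := Finset.mem_Icc.mp hi
            rw [zpow2 q (n - i + 2) (by omega), zpow2 q (n - i + 1) (by omega), ← htdef,
              show n - i + 2 = n - i + 1 + 1 from rfl,
              qPoch_eq t (n - i + 1) (d - 2 * n), qPoch_eq t (n - i) (d - 2 * n),
              ← div_pow, PP_ratio ht (n - i) (d - 2 * n),
              show n - i + 1 + (d - 2 * n) = d + 1 - n - i by omega,
              show n - i + 1 = n + 1 - i by omega]
        _ = (PP t (d - n - r) (d - n) / PP t (n - r) n) ^ 2 := by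
            rw [Finset.prod_pow, Finset.prod_div_distrib]
            congr 2
            · have h1 := prodDesc t (d + 1 - n) r (by omega)
              rw [show d + 1 - n - 1 - r = d - n - r by omega,
                show d + 1 - n - 1 = d - n by omega] at h1
              exact h1
            · have h2 := prodDesc t (n + 1) r (by omega)
              rw [show n + 1 - 1 - r = n - r by omega, show n + 1 - 1 = n by omega] at h2
              exact h2
    · calc (∏ i ∈ Finset.Icc 1 r,
            ((1 - q ^ (2 * ((d : ℤ) - 2 * n + 3 + 2 * ((n : ℤ) - i)))) /
              (1 - q ^ (2 * ((d : ℤ) - 2 * n + 1 + 2 * ((n : ℤ) - i))))))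
          = ∏ i ∈ Finset.Icc 1 r, ((1 - t ^ (d + 1 - 2 * (i - 1))) / (1 - t ^ (d + 1 - 2 * i))) := by
            refine Finset.prod_congr rfl fun i hi => ?_
            obtain ⟨hi1, hi2⟩ := Finset.mem_Icc.mp hi
            rw [zpow2 q (d + 1 - 2 * (i - 1)) (by omega), zpow2 q (d + 1 - 2 * i) (by omega),
              ← htdef]
        _ = (1 - t ^ (d + 1 - 2 * 0)) / (1 - t ^ (d + 1 - 2 * r)) :=
            tele_down (fun k => 1 - t ^ (d + 1 - 2 * k)) 1 le_rfl r (by omega)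
              (fun k hk1 hk2 => hne _ (by omega))
        _ = (1 - t ^ (d + 1)) / (1 - t ^ (d + 1 - 2 * r)) := by
            rw [show d + 1 - 2 * 0 = d + 1 by omega]
  -- second product
  have hP2 : (∏ j ∈ Finset.Icc 1 r, ∏ k ∈ Finset.Icc (j + 1) r,
        (1 - q ^ (2 * ((d : ℤ) - 2 * n + 3 + ((n : ℤ) - j) + ((n : ℤ) - k)))) ^ 2 /
          (1 - q ^ (2 * ((d : ℤ) - 2 * n + 1 + ((n : ℤ) - j) + ((n : ℤ) - k)))) ^ 2)
      = (PP t (d - 2 * r) d / (PP t (d + 1 - 2 * r) (d - r + 1) * PP t (d - 2 * r) (d - r))) ^ 2 := by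
    calc (∏ j ∈ Finset.Icc 1 r, ∏ k ∈ Finset.Icc (j + 1) r,
        (1 - q ^ (2 * ((d : ℤ) - 2 * n + 3 + ((n : ℤ) - j) + ((n : ℤ) - k)))) ^ 2 /
          (1 - q ^ (2 * ((d : ℤ) - 2 * n + 1 + ((n : ℤ) - j) + ((n : ℤ) - k)))) ^ 2)
        = ∏ j ∈ Finset.Icc 1 r,
            (((1 - t ^ (d + 2 - 2 * j)) * (1 - t ^ (d + 1 - 2 * j))) /
              ((1 - t ^ (d + 2 - r - j)) * (1 - t ^ (d + 1 - r - j)))) ^ 2 := by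
          refine Finset.prod_congr rfl fun j hj => ?_
          obtain ⟨hj1, hj2⟩ := Finset.mem_Icc.mp hj
          have hstep : ∀ k ∈ Finset.Icc (j + 1) r,
              (1 - q ^ (2 * ((d : ℤ) - 2 * n + 3 + ((n : ℤ) - j) + ((n : ℤ) - k)))) ^ 2 /
                (1 - q ^ (2 * ((d : ℤ) - 2 * n + 1 + ((n : ℤ) - j) + ((n : ℤ) - k)))) ^ 2
              = (((1 - t ^ (d + 2 - j - (k - 1))) * (1 - t ^ (d + 1 - j - (k - 1)))) /
                  ((1 - t ^ (d + 2 - j - k)) * (1 - t ^ (d + 1 - j - k)))) ^ 2 := by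
            intro k hk
            obtain ⟨hk1, hk2⟩ := Finset.mem_Icc.mp hk
            rw [zpow2 q (d + 3 - j - k) (by omega), zpow2 q (d + 1 - j - k) (by omega), ← htdef,
              show d + 2 - j - (k - 1) = d + 3 - j - k by omega,
              show d + 1 - j - (k - 1) = d + 2 - j - k by omega, ← div_pow]
            congr 1
            rw [mul_comm ((1 : F) - t ^ (d + 3 - j - k)) ((1 : F) - t ^ (d + 2 - j - k)),
              mul_div_mul_left _ _ (hne (d + 2 - j - k) (by omega))]
          rw [Finset.prod_congr rfl hstep, Finset.prod_pow]
          congr 1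
          have T := tele_down (fun k => (1 - t ^ (d + 2 - j - k)) * (1 - t ^ (d + 1 - j - k)))
            (j + 1) (by omega) r (by omega)
            (fun k hk1 hk2 => mul_ne_zero (hne _ (by omega)) (hne _ (by omega)))
          calc (∏ k ∈ Finset.Icc (j + 1) r,
              ((1 - t ^ (d + 2 - j - (k - 1))) * (1 - t ^ (d + 1 - j - (k - 1))) /
                ((1 - t ^ (d + 2 - j - k)) * (1 - t ^ (d + 1 - j - k)))))
              = (1 - t ^ (d + 2 - j - (j + 1 - 1))) * (1 - t ^ (d + 1 - j - (j + 1 - 1))) /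
                  ((1 - t ^ (d + 2 - j - r)) * (1 - t ^ (d + 1 - j - r))) := T
            _ = (1 - t ^ (d + 2 - 2 * j)) * (1 - t ^ (d + 1 - 2 * j)) /
                  ((1 - t ^ (d + 2 - r - j)) * (1 - t ^ (d + 1 - r - j))) := by
                rw [show d + 2 - j - (j + 1 - 1) = d + 2 - 2 * j by omega,
                  show d + 1 - j - (j + 1 - 1) = d + 1 - 2 * j by omega,
                  show d + 2 - j - r = d + 2 - r - j by omega,
                  show d + 1 - j - r = d + 1 - r - j by omega]
      _ = (PP t (d - 2 * r) d / (PP t (d + 1 - 2 * r) (d - r + 1) * PP t (d - 2 * r) (d - r))) ^ 2 := by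
          rw [Finset.prod_pow, Finset.prod_div_distrib, prodN t r d (by omega),
            Finset.prod_mul_distrib]
          congr 3
          · have h5 := prodDesc t (d + 2 - r) r (by omega)
            rw [show d + 2 - r - 1 - r = d + 1 - 2 * r by omega,
              show d + 2 - r - 1 = d - r + 1 by omega] at h5
            exact h5
          · have h3 := prodDesc t (d + 1 - r) r (by omega)
            rw [show d + 1 - r - 1 - r = d - 2 * r by omega,
              show d + 1 - r - 1 = d - r by omega] at h3
            exact h3
  -- third product
  have hP3 : (∏ j ∈ Finset.Icc 1 r, ∏ k ∈ Finset.Icc (r + 1) n,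
        (1 - q ^ (2 * ((d : ℤ) - 2 * n + 2 + ((n : ℤ) - j) + ((n : ℤ) - k)))) ^ 2 *
            (1 - q ^ (2 * ((1 : ℤ) + k - j))) ^ 2 /
          ((1 - q ^ (2 * ((d : ℤ) - 2 * n + 1 + ((n : ℤ) - j) + ((n : ℤ) - k)))) ^ 2 *
            (1 - q ^ (2 * ((k : ℤ) - j))) ^ 2))
      = ((PP t (d - 2 * r) (d - r) * PP t (n - r) n) /
          (PP t (d - n - r) (d - n) * PP t 0 r)) ^ 2 := by
    calc (∏ j ∈ Finset.Icc 1 r, ∏ k ∈ Finset.Icc (r + 1) n,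
        (1 - q ^ (2 * ((d : ℤ) - 2 * n + 2 + ((n : ℤ) - j) + ((n : ℤ) - k)))) ^ 2 *
            (1 - q ^ (2 * ((1 : ℤ) + k - j))) ^ 2 /
          ((1 - q ^ (2 * ((d : ℤ) - 2 * n + 1 + ((n : ℤ) - j) + ((n : ℤ) - k)))) ^ 2 *
            (1 - q ^ (2 * ((k : ℤ) - j))) ^ 2))
        = ∏ j ∈ Finset.Icc 1 r,
            (((1 - t ^ (d + 1 - r - j)) * (1 - t ^ (n + 1 - j))) /
              ((1 - t ^ (d + 1 - n - j)) * (1 - t ^ (r + 1 - j)))) ^ 2 := by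
          refine Finset.prod_congr rfl fun j hj => ?_
          obtain ⟨hj1, hj2⟩ := Finset.mem_Icc.mp hj
          have hstep : ∀ k ∈ Finset.Icc (r + 1) n,
              (1 - q ^ (2 * ((d : ℤ) - 2 * n + 2 + ((n : ℤ) - j) + ((n : ℤ) - k)))) ^ 2 *
                  (1 - q ^ (2 * ((1 : ℤ) + k - j))) ^ 2 /
                ((1 - q ^ (2 * ((d : ℤ) - 2 * n + 1 + ((n : ℤ) - j) + ((n : ℤ) - k)))) ^ 2 *
                  (1 - q ^ (2 * ((k : ℤ) - j))) ^ 2)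
              = ((1 - t ^ (d + 1 - j - (k - 1))) / (1 - t ^ (d + 1 - j - k))) ^ 2 *
                  ((1 - t ^ (k + 1 - j)) / (1 - t ^ (k - 1 + 1 - j))) ^ 2 := by
            intro k hk
            obtain ⟨hk1, hk2⟩ := Finset.mem_Icc.mp hk
            rw [zpow2 q (d + 2 - j - k) (by omega), zpow2 q (k + 1 - j) (by omega),
              zpow2 q (d + 1 - j - k) (by omega), zpow2 q (k - j) (by omega), ← htdef,
              show d + 1 - j - (k - 1) = d + 2 - j - k by omega,
              show k - 1 + 1 - j = k - j by omega, div_pow, div_pow, div_mul_div_comm]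
          rw [Finset.prod_congr rfl hstep, Finset.prod_mul_distrib, Finset.prod_pow,
            Finset.prod_pow]
          have T1 := tele_down (fun k => 1 - t ^ (d + 1 - j - k)) (r + 1) (by omega) n (by omega)
            (fun k hk1 hk2 => hne _ (by omega))
          have T2 := tele_up (fun k => 1 - t ^ (k + 1 - j)) (r + 1) (by omega) n (by omega)
            (fun k hk1 hk2 => hne _ (by omega))
          rw [show (∏ k ∈ Finset.Icc (r + 1) n,
              ((1 - t ^ (d + 1 - j - (k - 1))) / (1 - t ^ (d + 1 - j - k))))
              = (1 - t ^ (d + 1 - j - (r + 1 - 1))) / (1 - t ^ (d + 1 - j - n)) from T1,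
            show (∏ k ∈ Finset.Icc (r + 1) n,
              ((1 - t ^ (k + 1 - j)) / (1 - t ^ (k - 1 + 1 - j))))
              = (1 - t ^ (n + 1 - j)) / (1 - t ^ (r + 1 - 1 + 1 - j)) from T2,
            show d + 1 - j - (r + 1 - 1) = d + 1 - r - j by omega,
            show r + 1 - 1 + 1 - j = r + 1 - j by omega,
            show d + 1 - j - n = d + 1 - n - j by omega, ← mul_pow, div_mul_div_comm]
      _ = ((PP t (d - 2 * r) (d - r) * PP t (n - r) n) /
            (PP t (d - n - r) (d - n) * PP t 0 r)) ^ 2 := by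
          rw [Finset.prod_pow, Finset.prod_div_distrib, Finset.prod_mul_distrib,
            Finset.prod_mul_distrib]
          congr 3
          · have h3 := prodDesc t (d + 1 - r) r (by omega)
            rw [show d + 1 - r - 1 - r = d - 2 * r by omega,
              show d + 1 - r - 1 = d - r by omega] at h3
            exact h3
          · have h2 := prodDesc t (n + 1) r (by omega)
            rw [show n + 1 - 1 - r = n - r by omega, show n + 1 - 1 = n by omega] at h2
            exact h2
          · have h1 := prodDesc t (d + 1 - n) r (by omega)
            rw [show d + 1 - n - 1 - r = d - n - r by omega,
              show d + 1 - n - 1 = d - n by omega] at h1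
            exact h1
          · have h4 := prodDesc t (r + 1) r (by omega)
            rw [show r + 1 - 1 - r = 0 by omega, show r + 1 - 1 = r by omega] at h4
            exact h4
  -- right-hand side conversions
  have hR1 : q ^ (2 * r * (d - r)) = t ^ (r * (d - r)) := by
    rw [show 2 * r * (d - r) = 2 * (r * (d - r)) from by ring, pow_mul, ← htdef]
  have hR2 : q ^ (2 * (r - 1) * (d - r + 1)) = t ^ ((r - 1) * (d - r + 1)) := by
    rw [show 2 * (r - 1) * (d - r + 1) = 2 * ((r - 1) * (d - r + 1)) from by ring, pow_mul,
      ← htdef]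
  have hQ : q ^ (-2 : ℤ) = t⁻¹ := by
    rw [show (-2 : ℤ) = -((2 : ℕ) : ℤ) from by norm_num, zpow_neg, zpow_natCast, ← htdef]
  have hB1 : qBinom t⁻¹ d r = (t ^ (r * (d - r)))⁻¹ * (PP t r d / PP t 0 (d - r)) :=
    qBinom_inv ht ht0 d r (by omega)
  have hB2 : qBinom t⁻¹ d (r - 1)
      = (t ^ ((r - 1) * (d - r + 1)))⁻¹ * (PP t (r - 1) d / PP t 0 (d - r + 1)) := by
    have h := qBinom_inv ht ht0 d (r - 1) (by omega)
    rw [show d - (r - 1) = d - r + 1 by omega] at h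
    exact h
  -- structural PP facts
  have hP0r : PP t 0 r = PP t 0 (r - 1) * (1 - t ^ r) := by
    conv_lhs => rw [show r = r - 1 + 1 by omega]
    rw [PP_top t (by omega), show r - 1 + 1 = r by omega]
  have hArel : PP t (d - r) d = (1 - t ^ (d - r + 1)) * PP t (d - r + 1) d :=
    PP_bot t (by omega)
  have hq1 : PP t r d / PP t 0 (d - r)
      = (1 - t ^ (d - r + 1)) * PP t (d - r + 1) d / (PP t 0 (r - 1) * (1 - t ^ r)) := by
    rw [div_eq_div_iff (PP_ne ht _ _) (mul_ne_zero (PP_ne ht _ _) (hne r hr))]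
    calc PP t r d * (PP t 0 (r - 1) * (1 - t ^ r))
        = PP t 0 r * PP t r d := by rw [hP0r]; ring
      _ = PP t 0 d := PP_split t (by omega) (by omega)
      _ = PP t 0 (d - r) * PP t (d - r) d := (PP_split t (by omega) (by omega)).symm
      _ = (1 - t ^ (d - r + 1)) * PP t (d - r + 1) d * PP t 0 (d - r) := by rw [hArel]; ring
  have hq2 : PP t (r - 1) d / PP t 0 (d - r + 1) = PP t (d - r + 1) d / PP t 0 (r - 1) := by
    rw [div_eq_div_iff (PP_ne ht _ _) (PP_ne ht _ _)]
    calc PP t (r - 1) d * PP t 0 (r - 1) = PP t 0 (r - 1) * PP t (r - 1) d := mul_comm _ _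
      _ = PP t 0 d := PP_split t (by omega) (by omega)
      _ = PP t 0 (d - r + 1) * PP t (d - r + 1) d := (PP_split t (by omega) (by omega)).symm
      _ = PP t (d - r + 1) d * PP t 0 (d - r + 1) := mul_comm _ _
  have hN : PP t (d - 2 * r) d
      = (1 - t ^ (d + 1 - 2 * r)) * (PP t (d + 1 - 2 * r) (d - r + 1) * PP t (d - r + 1) d) := by
    rw [PP_bot t (show d - 2 * r < d by omega), show d - 2 * r + 1 = d + 1 - 2 * r by omega,
      ← PP_split t (show d + 1 - 2 * r ≤ d - r + 1 by omega) (show d - r + 1 ≤ d by omega)]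
  -- power decompositions
  have e1 : t ^ (d + 1) = t ^ (d + 1 - 2 * r) * (t ^ r * t ^ r) := by
    rw [← pow_add, ← pow_add]; congr 1; omega
  have e2 : t ^ (d - r + 1) = t ^ (d + 1 - 2 * r) * t ^ r := by
    rw [← pow_add]; congr 1; omega
  have e3 : t ^ (r * (d - r)) = t ^ ((r - 1) * (d - r + 1)) * t ^ (d + 1 - 2 * r) := by
    rw [← pow_add]; congr 1
    zify [show r ≤ d by omega, hr, show 2 * r ≤ d + 1 by omega]
    ring
  rw [hpref, hP1, hP2, hP3, hR1, hR2, hQ, hB1, hB2, hq1, hq2, hN, hP0r, e1, e2, e3]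
  have n1 : PP t (d + 1 - 2 * r) (d - r + 1) ≠ 0 := PP_ne ht _ _
  have n2 : PP t (d - 2 * r) (d - r) ≠ 0 := PP_ne ht _ _
  have n3 : PP t (n - r) n ≠ 0 := PP_ne ht _ _
  have n4 : PP t (d - n - r) (d - n) ≠ 0 := PP_ne ht _ _
  have n5 : PP t 0 (r - 1) ≠ 0 := PP_ne ht _ _
  have n6 : PP t (d - r + 1) d ≠ 0 := PP_ne ht _ _
  have n7 : (1 : F) - t ^ (d + 1 - 2 * r) ≠ 0 := hne _ (by omega)
  have n8 : (1 : F) - t ^ r ≠ 0 := hne _ hr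
  have n9 : t ^ (d + 1 - 2 * r) ≠ 0 := pow_ne_zero _ ht0
  have n10 : (t : F) ^ r ≠ 0 := pow_ne_zero _ ht0
  have n11 : t ^ ((r - 1) * (d - r + 1)) ≠ 0 := pow_ne_zero _ ht0
  generalize hg1 : PP t (d - n - r) (d - n) = S at n4 ⊢
  generalize hg2 : PP t (n - r) n = P at n3 ⊢
  generalize hg3 : PP t (d + 1 - 2 * r) (d - r + 1) = X at n1 ⊢
  generalize hg4 : PP t (d - 2 * r) (d - r) = Y at n2 ⊢
  generalize hg5 : PP t (d - r + 1) d = A at n6 ⊢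
  generalize hg6 : PP t 0 (r - 1) = B at n5 ⊢
  generalize hg7 : t ^ (d + 1 - 2 * r) = u at n7 n9 ⊢
  generalize hg8 : t ^ r = v at n8 n10 ⊢
  generalize hg9 : t ^ ((r - 1) * (d - r + 1)) = w at n11 ⊢
  linear_combination endgame S P X Y A B u v w n4 n3 n1 n2 n6 n5 n9 n10 n11 n7 n8
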